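/- arXiv:2202.11293 — 2 statements merged into one kernel-verified Lean document; each statement's English description precedes it below -/
import Mathlib

section
/- If t is a Liouville number, then (1/2)·(t + 1/t) is a Liouville number. -/
/-!
If `m / k` approximates `x` to within `k ^ -(2n+1)`, then `m / k + k / m` is a rational with
denominator `|m| k ≈ |x| k²` approximating `x + x⁻¹` to within a constant times `k ^ -2n`, since
`y ↦ y + y⁻¹` is Lipschitz near `x ≠ 0`; it differs from `x + x⁻¹` because `x` is irrational.
Hence `x + x⁻¹` is Liouville with every exponent `n`, and multiplying by `1 / 2` preserves this.
-/

open Filter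

theorem add_inv_eq_add_inv_iff {K : Type*} [Field K] {x y : K} (hx : x ≠ 0) (hy : y ≠ 0) :
    x + x⁻¹ = y + y⁻¹ ↔ x = y ∨ x = y⁻¹ := by
  have : x + x⁻¹ - (y + y⁻¹) = (x - y) * (x - y⁻¹) * x⁻¹ := by field_simp; ring
  rw [← sub_eq_zero, this, mul_eq_zero, mul_eq_zero, sub_eq_zero, sub_eq_zero]
  simp [hx]

theorem add_inv_intCast_div_natCast (m : ℤ) (k : ℕ) :
    ((m : ℝ) / k + ((m : ℝ) / k)⁻¹) = ((m.sign * (m ^ 2 + k ^ 2) : ℤ) : ℝ) / (m.natAbs * k : ℕ) := by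
  rcases eq_or_ne k 0 with rfl | hk
  · simp
  rcases lt_trichotomy m 0 with hm | rfl | hm
  · simp only [Int.sign_eq_neg_one_of_neg hm, Nat.cast_mul, Nat.cast_natAbs, Int.cast_abs,
      abs_of_neg (Int.cast_lt_zero.2 hm)]
    push_cast
    field_simp
  · simp
  · simp only [Int.sign_eq_one_of_pos hm, Nat.cast_mul, Nat.cast_natAbs, Int.cast_abs,
      abs_of_pos (Int.cast_pos.2 hm)]
    push_cast
    field_simp

theorem abs_add_inv_sub_add_inv_le {x y : ℝ} (hxy : |x - y| ≤ |x| / 2) :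
    |x + x⁻¹ - (y + y⁻¹)| ≤ (1 + 2 / x ^ 2) * |x - y| := by
  rcases eq_or_ne x 0 with rfl | hx
  · simp_all
  have hy : |x| / 2 ≤ |y| := by linarith [abs_sub_abs_le_abs_sub x y]
  have hy0 : y ≠ 0 := abs_pos.1 ((half_pos (abs_pos.2 hx)).trans_le hy)
  have hxy' : x ^ 2 / 2 ≤ |x * y| := by
    rw [abs_mul, ← sq_abs]; nlinarith [abs_nonneg x]
  have hfactor : x + x⁻¹ - (y + y⁻¹) = (x - y) * (1 - (x * y)⁻¹) := by field_simp; ring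
  have hbound : |1 - (x * y)⁻¹| ≤ 1 + 2 / x ^ 2 := calc
    |1 - (x * y)⁻¹| ≤ 1 + |(x * y)⁻¹| := by simpa using abs_sub (1 : ℝ) (x * y)⁻¹
    _ ≤ 1 + 2 / x ^ 2 := by rw [abs_inv, ← inv_div]; gcongr
  rw [hfactor, abs_mul, mul_comm]
  exact mul_le_mul_of_nonneg_right hbound (abs_nonneg _)

theorem natAbs_mul_le_of_abs_sub_div_le {x : ℝ} {m : ℤ} {k : ℕ} (h : |x - m / k| ≤ |x| / 2) :
    ((m.natAbs * k : ℕ) : ℝ) ≤ 3 / 2 * |x| * k ^ 2 := by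
  rcases eq_or_ne k 0 with rfl | hk
  · simp
  have hk0 : (0 : ℝ) < k := by positivity
  have : |(m / k : ℝ)| ≤ 3 / 2 * |x| := by
    linarith [abs_sub_abs_le_abs_sub (m / k : ℝ) x, abs_sub_comm x (m / k)]
  rw [abs_div, Nat.abs_cast, div_le_iff₀ hk0] at this
  push_cast [Nat.cast_natAbs]
  nlinarith

namespace Liouville

variable {x : ℝ}

theorem liouvilleWith_add_inv (hx : Liouville x) (n : ℕ) : LiouvilleWith n (x + x⁻¹) := by
  have hx0 : 0 < |x| := abs_pos.2 hx.irrational.ne_zero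
  refine ⟨(1 + 2 / x ^ 2) * (3 / 2 * |x|) ^ n, frequently_atTop.2 fun N => ?_⟩
  obtain ⟨k, ⟨hkN, hk⟩, m, hne, hlt⟩ := (((eventually_ge_atTop N).and
    (tendsto_natCast_atTop_atTop.eventually_gt_atTop (2 / |x|))).and_frequently
    (hx.frequently_exists_num (2 * n + 1))).exists
  -- the extra factor `k⁻¹` in the exponent `2n+1` puts `m / k` within `|x| / 2` of `x`
  have hk0 : (0 : ℝ) < k := (by positivity : (0 : ℝ) < 2 / |x|).trans hk
  have hk1 : (1 : ℝ) ≤ k := Nat.one_le_cast.2 (Nat.cast_pos.1 hk0)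
  have hclose : |x - m / k| ≤ |x| / 2 := calc
    |x - m / k| ≤ 1 / k := hlt.le.trans (one_div_le_one_div_of_le hk0 (le_self_pow₀ hk1 (by omega)))
    _ ≤ |x| / 2 := by rw [div_lt_iff₀ hx0] at hk; rw [div_le_div_iff₀ hk0 two_pos]; linarith
  have hm0 : m ≠ 0 := by
    rintro rfl
    simp only [Int.cast_zero, zero_div, sub_zero] at hclose
    linarith
  set b := m.natAbs * k
  have hkb : k ≤ b := Nat.le_mul_of_pos_left k (Int.natAbs_pos.2 hm0)
  have hb0 : (0 : ℝ) < b := hk0.trans_le (Nat.cast_le.2 hkb)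
  refine ⟨b, hkN.trans hkb, m.sign * (m ^ 2 + k ^ 2), ?_, ?_⟩
  all_goals rw [← add_inv_intCast_div_natCast]
  · rw [Ne, add_inv_eq_add_inv_iff hx.irrational.ne_zero (by positivity)]
    rintro (h | h)
    · exact hne h
    · exact hx.irrational.ne_rat ((m / k : ℚ)⁻¹) (by push_cast; exact h)
  · have hbk : (b / (3 / 2 * |x|)) ^ n ≤ (k : ℝ) ^ (2 * n + 1) := calc
      (b / (3 / 2 * |x|)) ^ n ≤ ((k : ℝ) ^ 2) ^ n := by
        gcongr
        rw [div_le_iff₀ (by positivity), mul_comm]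
        exact natAbs_mul_le_of_abs_sub_div_le hclose
      _ = (k : ℝ) ^ (2 * n) := by rw [← pow_mul]
      _ ≤ (k : ℝ) ^ (2 * n + 1) := pow_le_pow_right₀ hk1 (by omega)
    calc |x + x⁻¹ - ((m : ℝ) / k + ((m : ℝ) / k)⁻¹)| ≤ (1 + 2 / x ^ 2) * |x - m / k| :=
          abs_add_inv_sub_add_inv_le hclose
      _ < (1 + 2 / x ^ 2) * (1 / k ^ (2 * n + 1)) := by gcongr
      _ ≤ (1 + 2 / x ^ 2) * (1 / (b / (3 / 2 * |x|)) ^ n) := by gcongr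
      _ = (1 + 2 / x ^ 2) * (3 / 2 * |x|) ^ n / (b : ℝ) ^ (n : ℝ) := by
        rw [Real.rpow_natCast, div_pow, one_div_div, mul_div_assoc]

theorem add_inv (hx : Liouville x) : Liouville (x + x⁻¹) :=
  forall_liouvilleWith_iff.1 fun p => (hx.liouvilleWith_add_inv ⌈p⌉₊).mono (Nat.le_ceil p)

end Liouville

theorem liouville_half_add_inv (t : ℝ) (h : Liouville t) :
    Liouville ((1 / 2) * (t + 1 / t)) := by
  have : (1 / 2) * (t + 1 / t) = ((1 / 2 : ℚ) : ℝ) * (t + t⁻¹) := by push_cast; rw [one_div t]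
  rw [this]
  exact forall_liouvilleWith_iff.1 fun p => (h.add_inv.liouvilleWith p).rat_mul (by norm_num)
end

section
/- If t is a Liouville number, then (1/2)·(t − 1/t) is a Liouville number. -/
/-!
If `m / n` approximates `t` to order `2p`, then `m / n - n / m = (m² - n²) / (mn)` approximates
`t - 1/t` to order `p`: the map `s ↦ s - 1/s` is Lipschitz near `t ≠ 0`, and the new denominator
`mn` is of size `n²`. Since a Liouville number has every order of approximation, so does
`t - 1/t`, and multiplying by `1/2` preserves this.
-/

open Filter Set

theorem strictMonoOn_sub_inv : StrictMonoOn (fun x : ℝ => x - x⁻¹) (Ioi 0) := by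
  intro a ha b _ hab
  have : b⁻¹ < a⁻¹ := inv_strictAnti₀ ha hab
  simp only
  linarith

theorem sub_inv_sub_sub_inv {x s : ℝ} (hx : x ≠ 0) (hs : s ≠ 0) :
    (x - x⁻¹) - (s - s⁻¹) = (x - s) * (1 + (x * s)⁻¹) := by
  field_simp
  ring

theorem abs_sub_inv_sub_sub_inv_le {c x s : ℝ} (hc : 0 < c) (hx : c ≤ x) (hs : c ≤ s) :
    |(x - x⁻¹) - (s - s⁻¹)| ≤ (1 + (c ^ 2)⁻¹) * |x - s| := by
  have hxs : (x * s)⁻¹ ≤ (c ^ 2)⁻¹ := by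
    gcongr
    nlinarith
  have hx₀ := hc.trans_le hx
  have hs₀ := hc.trans_le hs
  rw [sub_inv_sub_sub_inv hx₀.ne' hs₀.ne', abs_mul, mul_comm, abs_of_pos (by positivity)]
  gcongr

theorem natCast_div_sub_inv {m n : ℕ} (hm : m ≠ 0) (hn : n ≠ 0) :
    (m / n : ℝ) - (m / n : ℝ)⁻¹ = ((m ^ 2 - n ^ 2 : ℤ) : ℝ) / ((m * n : ℕ) : ℝ) := by
  push_cast
  field_simp

namespace LiouvilleWith

variable {p x : ℝ}

theorem of_frequently_exists {C y : ℝ}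
    (h : ∃ᶠ n : ℕ in atTop, ∃ (a : ℤ) (b : ℕ), n ≤ b ∧ y ≠ a / b ∧ |y - a / b| < C / b ^ p) :
    LiouvilleWith p y := by
  refine ⟨C, frequently_atTop.2 fun N => ?_⟩
  obtain ⟨n, hNn, a, b, hnb, hne, hlt⟩ := frequently_atTop.1 h N
  exact ⟨b, hNn.trans hnb, a, hne, hlt⟩

theorem sub_inv_of_pos (h : LiouvilleWith (2 * p) x) (hp : 0 < p) (hx : 0 < x) :
    LiouvilleWith p (x - x⁻¹) := by
  obtain ⟨C, hC₀, hC⟩ := h.exists_pos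
  have hsmall : ∀ᶠ n : ℕ in atTop, C / (n : ℝ) ^ (2 * p) < x / 2 := by
    have := (tendsto_rpow_atTop (by positivity : 0 < 2 * p)).comp tendsto_natCast_atTop_atTop
    exact (this.const_div_atTop C).eventually (gt_mem_nhds (by positivity))
  -- Eventually `m / n ∈ (x/2, 3x/2)`: there `s ↦ s - s⁻¹` is `(1 + (x/2)⁻²)`-Lipschitz and the
  -- new denominator `mn = (m/n) n²` is below `(3x/2) n²`.
  refine of_frequently_exists (C := (1 + ((x / 2) ^ 2)⁻¹) * C * (3 * x / 2) ^ p)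
    ((hsmall.and_frequently hC).mono ?_)
  rintro n ⟨hn_small, hn, m, hne, hlt⟩
  have hn₀ : (0 : ℝ) < n := by exact_mod_cast hn
  set s : ℝ := m / n with hs
  obtain ⟨hs_lo, hs_hi⟩ : x / 2 < s ∧ s < 3 * x / 2 := by
    have := abs_lt.1 (hlt.trans hn_small)
    constructor <;> linarith
  have hs₀ : 0 < s := by linarith
  have hm₀ : (0 : ℝ) < m := (div_pos_iff_of_pos_right hn₀).1 hs₀
  lift m to ℕ using by exact_mod_cast hm₀.le
  push_cast at hs hm₀
  have hb : ((m * n : ℕ) : ℝ) = s * n ^ 2 := by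
    rw [hs]; push_cast; field_simp
  have hval := natCast_div_sub_inv (by exact_mod_cast hm₀.ne') (by exact_mod_cast hn₀.ne')
  rw [← hs] at hval
  have hden : ((m * n : ℕ) : ℝ) ^ p ≤ (3 * x / 2) ^ p * (n : ℝ) ^ (2 * p) := by
    rw [hb, Real.mul_rpow hs₀.le (by positivity), Real.rpow_mul hn₀.le, Real.rpow_two]
    gcongr
  refine ⟨m ^ 2 - n ^ 2, m * n, Nat.le_mul_of_pos_left n (by exact_mod_cast hm₀), ?_, ?_⟩
  · rw [← hval]
    exact strictMonoOn_sub_inv.injOn.ne hx hs₀ hne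
  · rw [← hval]
    set L := 1 + ((x / 2) ^ 2)⁻¹
    calc |x - x⁻¹ - (s - s⁻¹)| ≤ L * |x - s| :=
          abs_sub_inv_sub_sub_inv_le (by positivity) (by linarith) hs_lo.le
      _ < L * (C / n ^ (2 * p)) := by gcongr
      _ = L * C * (3 * x / 2) ^ p / ((3 * x / 2) ^ p * n ^ (2 * p)) := by
          field_simp
      _ ≤ L * C * (3 * x / 2) ^ p / ((m * n : ℕ) : ℝ) ^ p := by
          have : (0 : ℝ) < (m * n : ℕ) := by rw [hb]; positivity
          gcongr

theorem sub_inv (h : LiouvilleWith (2 * p) x) (hp : 0 < p) (hx : x ≠ 0) :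
    LiouvilleWith p (x - x⁻¹) := by
  rcases hx.lt_or_gt with hx | hx
  · have := h.neg.sub_inv_of_pos hp (neg_pos.2 hx)
    rwa [show -x - (-x)⁻¹ = -(x - x⁻¹) by ring, neg_iff] at this
  · exact h.sub_inv_of_pos hp hx

end LiouvilleWith

namespace Liouville

variable {x : ℝ}

theorem rat_mul (h : Liouville x) {r : ℚ} (hr : r ≠ 0) : Liouville (r * x) :=
  forall_liouvilleWith_iff.1 fun p => (h.liouvilleWith p).rat_mul hr

theorem sub_inv (h : Liouville x) : Liouville (x - x⁻¹) :=
  forall_liouvilleWith_iff.1 fun p =>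
    ((h.liouvilleWith (2 * max p 1)).sub_inv (by positivity) h.irrational.ne_zero).mono
      (le_max_left p 1)

end Liouville

theorem liouville_half_sub_inv (t : ℝ) (h : Liouville t) :
    Liouville ((1 / 2) * (t - 1 / t)) := by
  simpa [one_div] using h.sub_inv.rat_mul (r := 1 / 2) (by norm_num)
end
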